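/- arXiv:2511.21929 — 5 statements merged into one kernel-verified Lean document; each statement's English description precedes it below -/
import Mathlib

section
/- For any random variable X with distribution measure μ and any β ∈ (0,1), the left quantile function satisfies lim_{α↓0} R_{[β-α,β]}(μ) = q_β^-(μ), i.e., the averaged quantile over a shrinking left interval converges to the left β-quantile. -/
open MeasureTheory Set Filter

/-- Left `t`-quantile of a Borel probability measure `μ` on `ℝ`. -/
noncomputable def mQuantile (μ : Measure ℝ) (t : ℝ) : ℝ :=
  sInf {x : ℝ | t ≤ (μ (Set.Iic x)).toReal}

/-- Averaged quantile functional `R_I` for a measure on `ℝ`. -/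
noncomputable def mAvgQuantile (μ : Measure ℝ) (I : Set ℝ) : ℝ :=
  (volume I).toReal⁻¹ * ∫ t in I, mQuantile μ t

/-!
The quantile function `q` is monotone on `(0, 1)` and left-continuous there: if `y < q β` then
`F y < β` for the distribution function `F`, and `y ≤ q t` for every `t ∈ (F y, β]`. Monotonicity
also makes `q` integrable near `β`, and the average of an integrable function over `[β - α, β]`
lies in every closed ball containing its values there, so it tends to the value at any point of
left-continuity.
-/

open ProbabilityTheory
open scoped Topology

theorem tendsto_setAverage_Icc_sub_of_continuousWithinAt {E : Type*} [NormedAddCommGroup E]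
    [NormedSpace ℝ E] [CompleteSpace E] {f : ℝ → E} {a b : ℝ} (hab : a < b)
    (hf : IntegrableOn f (Icc a b)) (hcont : ContinuousWithinAt f (Iic b) b) :
    Tendsto (fun α => ⨍ t in Icc (b - α) b, f t) (𝓝[>] 0) (𝓝 (f b)) := by
  rw [Metric.nhds_basis_closedBall.tendsto_right_iff]
  intro ε hε
  obtain ⟨c, ⟨hac, hcb⟩, hc⟩ :=
    (mem_nhdsLE_iff_exists_mem_Ico_Ioc_subset hab).1 (hcont (Metric.closedBall_mem_nhds _ hε))
  filter_upwards [Ioo_mem_nhdsGT (sub_pos.2 hcb)] with α ⟨hα0, hα⟩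
  have hsub : Icc (b - α) b ⊆ Ioc c b := fun t ht => ⟨by linarith [ht.1], ht.2⟩
  refine (convex_closedBall _ _).set_average_mem Metric.isClosed_closedBall ?_ ?_ ?_ ?_
  · simpa [Real.volume_Icc] using hα0
  · simp [Real.volume_Icc]
  · exact ae_restrict_of_forall_mem measurableSet_Icc fun t ht => hc (hsub ht)
  · exact hf.mono_set (hsub.trans (Ioc_subset_Icc_self.trans (Icc_subset_Icc_left hac)))

section DistributionFunction

variable (μ : Measure ℝ)

theorem nonempty_setOf_le_cdf {t : ℝ} (ht : t < 1) : {x | t ≤ cdf μ x}.Nonempty :=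
  ((tendsto_cdf_atTop μ).eventually_const_le ht).exists

theorem bddBelow_setOf_le_cdf {t : ℝ} (ht : 0 < t) : BddBelow {x | t ≤ cdf μ x} := by
  obtain ⟨x₀, hx₀⟩ := ((tendsto_cdf_atBot μ).eventually_lt_const ht).exists
  exact ⟨x₀, fun x hx => le_of_not_gt fun hlt => (hx.trans (monotone_cdf μ hlt.le)).not_gt hx₀⟩

variable [IsProbabilityMeasure μ]

theorem mQuantile_eq_sInf_cdf (t : ℝ) : mQuantile μ t = sInf {x | t ≤ cdf μ x} := by
  simp only [mQuantile, cdf_eq_real, measureReal_def]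

theorem monotoneOn_mQuantile : MonotoneOn (mQuantile μ) (Ioo 0 1) := by
  intro s hs t ht hst
  simp only [mQuantile_eq_sInf_cdf]
  exact csInf_le_csInf (bddBelow_setOf_le_cdf μ hs.1) (nonempty_setOf_le_cdf μ ht.2)
    fun x hx => hst.trans hx

theorem cdf_lt_of_lt_mQuantile {t y : ℝ} (ht : 0 < t) (hy : y < mQuantile μ t) :
    cdf μ y < t := by
  rw [mQuantile_eq_sInf_cdf] at hy
  exact lt_of_not_ge fun h => hy.not_ge (csInf_le (bddBelow_setOf_le_cdf μ ht) h)

theorem le_mQuantile_of_cdf_lt {t y : ℝ} (hy : cdf μ y < t) (ht : t < 1) :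
    y ≤ mQuantile μ t := by
  rw [mQuantile_eq_sInf_cdf]
  exact le_csInf (nonempty_setOf_le_cdf μ ht) fun x hx =>
    le_of_not_gt fun hxy => (hy.trans_le hx).not_ge (monotone_cdf μ hxy.le)

theorem continuousWithinAt_mQuantile_Iic {β : ℝ} (hβ : β ∈ Ioo 0 1) :
    ContinuousWithinAt (mQuantile μ) (Iic β) β := by
  refine tendsto_order.2 ⟨fun z hz => ?_, fun z hz => ?_⟩
  · obtain ⟨y, hzy, hy⟩ := exists_between hz
    filter_upwards [Ioc_mem_nhdsLE (cdf_lt_of_lt_mQuantile μ hβ.1 hy)] with t ht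
    exact hzy.trans_le (le_mQuantile_of_cdf_lt μ ht.1 (ht.2.trans_lt hβ.2))
  · filter_upwards [Ioc_mem_nhdsLE hβ.1] with t ht
    exact (monotoneOn_mQuantile μ ⟨ht.1, ht.2.trans_lt hβ.2⟩ hβ ht.2).trans_lt hz

end DistributionFunction

theorem mAvgQuantile_eq_setAverage (μ : Measure ℝ) (I : Set ℝ) :
    mAvgQuantile μ I = ⨍ t in I, mQuantile μ t := by
  rw [setAverage_eq, smul_eq_mul, measureReal_def, mAvgQuantile]

theorem stmt2 (μ : Measure ℝ) [IsProbabilityMeasure μ] (β : ℝ) (hβ : β ∈ Set.Ioo (0 : ℝ) 1) :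
    Filter.Tendsto (fun α : ℝ => mAvgQuantile μ (Set.Icc (β - α) β))
      (nhdsWithin 0 (Set.Ioi 0)) (nhds (mQuantile μ β)) := by
  have hsub : Icc (β / 2) β ⊆ Ioo 0 1 := Icc_subset_Ioo (half_pos hβ.1) hβ.2
  have hint : IntegrableOn (mQuantile μ) (Icc (β / 2) β) :=
    ((monotoneOn_mQuantile μ).mono hsub).integrableOn_isCompact isCompact_Icc
  simpa only [mAvgQuantile_eq_setAverage] using
    tendsto_setAverage_Icc_sub_of_continuousWithinAt (half_lt_self hβ.1) hint
      (continuousWithinAt_mQuantile_Iic μ hβ)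
end

section
/- Let μ be a Borel probability measure on ℝ, r ∈ (0,1), and U a random variable uniformly distributed on [r,1]. Then the distribution of q_U^-(μ) is the r-tail distribution μ^{r+}, i.e., P(q_U^-(μ) ≤ x) = max{(F(x) - r)/(1-r), 0} for all x ∈ ℝ, where F(x) = μ((-∞,x]). -/
/-!
For `0 < t < 1` the left quantile is the lower adjoint of the cdf `F`: `q_t ≤ x ↔ t ≤ F x`
(right continuity of `F` makes the infimum attained). Since `U ∈ [r, 1)` almost surely,
`{q_U ≤ x}` is a.s. the event `{U ≤ F x}`, whose probability under the uniform law on `[r, 1]` is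
`max ((F x - r) / (1 - r)) 0`.
-/

open MeasureTheory Set Filter

open Topology ProbabilityTheory

theorem StieltjesFunction.csInf_le_iff (F : StieltjesFunction ℝ) {t x : ℝ}
    (hne : {y | t ≤ F y}.Nonempty) (hbdd : BddBelow {y | t ≤ F y}) :
    sInf {y | t ≤ F y} ≤ x ↔ t ≤ F x := by
  refine ⟨fun h => ?_, fun h => csInf_le hbdd h⟩
  suffices t ≤ F (sInf {y | t ≤ F y}) from this.trans (F.mono h)
  -- right continuity at the infimum: each `y` above it exceeds some element of the set
  refine ge_of_tendsto ((F.right_continuous _).mono_left (nhdsWithin_mono _ Ioi_subset_Ici_self)) ?_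
  filter_upwards [self_mem_nhdsWithin] with y hy
  obtain ⟨a, ha, hay⟩ := exists_lt_of_csInf_lt hne hy
  exact ha.trans (F.mono hay.le)

theorem mQuantile_le_iff (μ : Measure ℝ) [IsProbabilityMeasure μ] {t x : ℝ}
    (ht₀ : 0 < t) (ht₁ : t < 1) :
    mQuantile μ t ≤ x ↔ t ≤ (μ (Iic x)).toReal := by
  have hcdf : ∀ y, (μ (Iic y)).toReal = cdf μ y := fun y => (cdf_eq_real μ y).symm
  simp only [mQuantile, hcdf]
  refine (cdf μ).csInf_le_iff ?_ ?_
  · obtain ⟨y, hy⟩ := ((tendsto_cdf_atTop μ).eventually (eventually_gt_nhds ht₁)).exists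
    exact ⟨y, hy.le⟩
  · obtain ⟨y₀, hy₀⟩ :=
      eventually_atBot.mp ((tendsto_cdf_atBot μ).eventually (eventually_lt_nhds ht₀))
    exact ⟨y₀, fun y hy => le_of_not_ge fun hyy₀ => (hy₀ y hyy₀).not_ge hy⟩

namespace MeasureTheory.pdf

variable {Ω : Type*} [MeasurableSpace Ω] {P : Measure Ω} {X : Ω → ℝ} {a b : ℝ}

theorem isUniform_Icc_iff :
    IsUniform X (Icc a b) P ↔
      Measure.map X P = (ENNReal.ofReal (b - a))⁻¹ • volume.restrict (Icc a b) := by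
  rw [IsUniform, ProbabilityTheory.cond, Real.volume_Icc]

theorem IsUniform.ae_mem_Ico (hab : a < b) (hX : IsUniform X (Icc a b) P) :
    ∀ᵐ ω ∂P, X ω ∈ Ico a b := by
  have hvol : volume (Icc a b) ≠ 0 := by simpa [Real.volume_Icc] using hab
  change P (X ⁻¹' (Ico a b)ᶜ) = 0
  rw [hX.measure_preimage hvol measure_Icc_lt_top.ne measurableSet_Ico.compl, ← sdiff_eq, Icc_sdiff_Ico_same hab.le, Real.volume_singleton,
    ENNReal.zero_div]

theorem IsUniform.toReal_measure_preimage_Iic (hab : a < b) (hX : IsUniform X (Icc a b) P)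
    {c : ℝ} (hcb : c ≤ b) :
    (P (X ⁻¹' Iic c)).toReal = max ((c - a) / (b - a)) 0 := by
  have hvol : volume (Icc a b) ≠ 0 := by simpa [Real.volume_Icc] using hab
  have hIcc : Icc a b ∩ Iic c = Icc a c := by
    rw [← Ici_inter_Iic, inter_assoc, Iic_inter_Iic, min_eq_right hcb, Ici_inter_Iic]
  rw [hX.measure_preimage hvol measure_Icc_lt_top.ne measurableSet_Iic, hIcc, Real.volume_Icc,
    Real.volume_Icc, ENNReal.toReal_div, ENNReal.toReal_ofReal', ENNReal.toReal_ofReal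
    (sub_nonneg.mpr hab.le), ← max_div_div_right (sub_nonneg.mpr hab.le), zero_div]

end MeasureTheory.pdf

theorem stmt3_general {Ω : Type*} [MeasurableSpace Ω] (P : Measure Ω)
    (μ : Measure ℝ) [IsProbabilityMeasure μ] (r : ℝ) (hr : r ∈ Set.Ioo (0 : ℝ) 1)
    (U : Ω → ℝ)
    (hU : Measure.map U P = (ENNReal.ofReal (1 - r))⁻¹ • volume.restrict (Set.Icc r 1)) :
    ∀ x : ℝ, (P {ω | mQuantile μ (U ω) ≤ x}).toReal
      = max (((μ (Set.Iic x)).toReal - r) / (1 - r)) 0 := by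
  intro x
  have hUnif : pdf.IsUniform U (Icc r 1) P := pdf.isUniform_Icc_iff.mpr hU
  have hquantile : {ω | mQuantile μ (U ω) ≤ x} =ᵐ[P] U ⁻¹' Iic (μ (Iic x)).toReal := by
    filter_upwards [hUnif.ae_mem_Ico hr.2] with ω hω
    exact propext (mQuantile_le_iff μ (hr.1.trans_le hω.1) hω.2)
  rw [measure_congr hquantile]
  exact hUnif.toReal_measure_preimage_Iic hr.2 measureReal_le_one

theorem stmt3 {Ω : Type*} [MeasurableSpace Ω] (P : Measure Ω) [IsProbabilityMeasure P]
    (μ : Measure ℝ) [IsProbabilityMeasure μ] (r : ℝ) (hr : r ∈ Set.Ioo (0 : ℝ) 1)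
    (U : Ω → ℝ)
    (hU : Measure.map U P = (ENNReal.ofReal (1 - r))⁻¹ • volume.restrict (Set.Icc r 1)) :
    ∀ x : ℝ, (P {ω | mQuantile μ (U ω) ≤ x}).toReal
      = max (((μ (Set.Iic x)).toReal - r) / (1 - r)) 0 :=
  stmt3_general P μ r hr U hU
end

section
/- Let X be an integrable random variable, 0 ≤ r < r+s ≤ 1, and α ≥ 0, β > 0 with α + β ≤ 1 - r and α ≤ s. Then R_{[r, r+s]}(X) ≤ ((1-r-β)/s) · R_{[r, r+α] ∪ [r+α+β, 1]}(X) + (1 - (1-r-β)/s) · R_{[r+α, r+α+β]}(X). (This is the new RVaR inequality of the paper in the one-variable case n = 1.) -/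
/-!
Let `Q x = ∫₀ˣ q_u du` be the primitive of the left quantile function `q`. Since `q` is
nondecreasing on `(0, 1)`, `Q` is convex on `[0, 1]`, and each `R_I` in the statement is a
difference quotient of `Q` (for the union, a sum of two increments over its total length). After
clearing denominators the inequality is exactly the comparison of secant slopes
`(Q (r+α+β) - Q (r+α)) / β ≤ (Q 1 - Q (r+s)) / (1-r-s)`, which holds for the convex `Q` because
`r + α ≤ r + s` and `r + α + β ≤ 1`. The quantile function is integrable on `(0, 1)` because under
Lebesgue measure it has the law of `X`.
-/

open MeasureTheory Set Filter

/-- Left `u`-quantile of a random variable `X` under measure `μ`. -/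
noncomputable def leftQuantile {Ω : Type*} [MeasurableSpace Ω] (μ : Measure Ω)
    (X : Ω → ℝ) (u : ℝ) : ℝ :=
  sInf {x : ℝ | u ≤ (μ {ω | X ω ≤ x}).toReal}

/-- Averaged quantile functional `R_I`. -/
noncomputable def avgQuantile {Ω : Type*} [MeasurableSpace Ω] (μ : Measure Ω)
    (X : Ω → ℝ) (I : Set ℝ) : ℝ :=
  (volume I).toReal⁻¹ * ∫ u in I, leftQuantile μ X u

open ProbabilityTheory

-- Secant slopes increase when both endpoints move right, cross-multiplied so that the second
-- interval may be degenerate.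
theorem ConvexOn.mul_sub_le_mul_sub {s : Set ℝ} {f : ℝ → ℝ} (hf : ConvexOn ℝ s f)
    {x₁ y₁ x₂ y₂ : ℝ} (hx₁ : x₁ ∈ s) (hy₂ : y₂ ∈ s) (h₁ : x₁ < y₁) (hx : x₁ ≤ x₂)
    (hy : y₁ ≤ y₂) (h₂ : x₂ ≤ y₂) :
    (y₂ - x₂) * (f y₁ - f x₁) ≤ (y₁ - x₁) * (f y₂ - f x₂) := by
  rcases h₂.eq_or_lt with rfl | h₂
  · simp
  have hs : Icc x₁ y₂ ⊆ s := hf.1.ordConnected.out hx₁ hy₂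
  have h_right := hf.secant_mono hx₁ (hs ⟨h₁.le, hy⟩) hy₂ h₁.ne' (h₁.trans_le hy).ne' hy
  have h_left := hf.secant_mono hy₂ hx₁ (hs ⟨hx, h₂.le⟩) (h₁.trans_le hy).ne h₂.ne hx
  rw [← neg_div_neg_eq, neg_sub, neg_sub, ← neg_div_neg_eq (f x₂ - f y₂), neg_sub, neg_sub]
    at h_left
  rw [mul_comm (y₁ - x₁), mul_comm (y₂ - x₂), ← div_le_div_iff₀ (sub_pos.2 h₁) (sub_pos.2 h₂)]
  exact h_right.trans h_left

theorem MonotoneOn.convexOn_intervalIntegral {f : ℝ → ℝ} {a b : ℝ}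
    (hf : MonotoneOn f (Ioo a b)) (hint : IntegrableOn f (Icc a b)) :
    ConvexOn ℝ (Icc a b) (fun x => ∫ u in a..x, f u) := by
  have hii : ∀ x ∈ Icc a b, ∀ y ∈ Icc a b, IntervalIntegrable f volume x y :=
    fun x hx y hy => (hint.mono_set (uIcc_subset_Icc hx hy)).intervalIntegrable
  refine convexOn_iff_slope_mono_adjacent.2 ⟨convex_Icc a b, fun x y z hx hz hxy hyz => ?_⟩
  have ha : a ∈ Icc a b := ⟨le_rfl, hx.1.trans (hxy.trans hyz).le |>.trans hz.2⟩
  have hy : y ∈ Icc a b := ⟨hx.1.trans hxy.le, hyz.le.trans hz.2⟩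
  have hyo : y ∈ Ioo a b := ⟨hx.1.trans_lt hxy, hyz.trans_le hz.2⟩
  simp only [intervalIntegral.integral_interval_sub_left (hii a ha y hy) (hii a ha x hx),
    intervalIntegral.integral_interval_sub_left (hii a ha z hz) (hii a ha y hy)]
  have h_left : ∫ u in x..y, f u ≤ (y - x) * f y := by
    simpa using intervalIntegral.integral_mono_on_of_le_Ioo hxy.le (hii x hx y hy)
      intervalIntegrable_const
      fun u hu => hf ⟨hx.1.trans_lt hu.1, hu.2.trans hyo.2⟩ hyo hu.2.le
  have h_right : (z - y) * f y ≤ ∫ u in y..z, f u := by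
    simpa using intervalIntegral.integral_mono_on_of_le_Ioo hyz.le intervalIntegrable_const
      (hii y hy z hz)
      fun u hu => hf hyo ⟨hyo.1.trans hu.1, hu.2.trans_le hz.2⟩ hu.1.le
  calc (∫ u in x..y, f u) / (y - x) ≤ f y := by rwa [div_le_iff₀' (sub_pos.2 hxy)]
    _ ≤ (∫ u in y..z, f u) / (z - y) := by rwa [le_div_iff₀' (sub_pos.2 hyz)]

theorem setIntegral_Icc_eq_sub_intervalIntegral {f : ℝ → ℝ} {a b x y : ℝ}
    (hf : IntegrableOn f (Icc a b)) (hx : a ≤ x) (hxy : x ≤ y) (hy : y ≤ b) :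
    ∫ u in Icc x y, f u = (∫ u in a..y, f u) - ∫ u in a..x, f u := by
  have hii : ∀ z ∈ Icc a b, IntervalIntegrable f volume a z :=
    fun z hz =>
      (hf.mono_set (uIcc_subset_Icc ⟨le_rfl, hx.trans (hxy.trans hy)⟩ hz)).intervalIntegrable
  rw [integral_Icc_eq_integral_Ioc, ← intervalIntegral.integral_of_le hxy,
    intervalIntegral.integral_interval_sub_left (hii y ⟨hx.trans hxy, hy⟩)
      (hii x ⟨hx, hxy.trans hy⟩)]

namespace ProbabilityTheory

-- Only meaningful for `0 < u < 1`: otherwise the set may be unbounded below or empty, and `sInf`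
-- returns the junk value `0`.
noncomputable def quantile (ν : Measure ℝ) (u : ℝ) : ℝ :=
  sInf {x | u ≤ cdf ν x}

variable (ν : Measure ℝ) {u : ℝ}

theorem bddBelow_setOf_le_cdf (hu : 0 < u) : BddBelow {x | u ≤ cdf ν x} := by
  obtain ⟨x₀, hx₀⟩ :=
    ((tendsto_cdf_atBot ν).eventually (eventually_lt_nhds hu)).exists_forall_of_atBot
  exact ⟨x₀, fun x hx => le_of_not_gt fun hlt => (hx₀ x hlt.le).not_ge hx⟩

theorem nonempty_setOf_le_cdf (hu : u < 1) : {x | u ≤ cdf ν x}.Nonempty :=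
  ((tendsto_cdf_atTop ν).eventually (eventually_gt_nhds hu)).exists.imp fun _ h => h.le

theorem le_cdf_quantile (hu₁ : u < 1) : u ≤ cdf ν (quantile ν u) := by
  refine ge_of_tendsto (((cdf ν).right_continuous _).mono Ioi_subset_Ici_self)
    (eventually_nhdsWithin_of_forall fun y hy => ?_)
  obtain ⟨x, hx, hxy⟩ := exists_lt_of_csInf_lt (nonempty_setOf_le_cdf ν hu₁) hy
  exact hx.trans (monotone_cdf ν hxy.le)

theorem quantile_le_iff (hu₀ : 0 < u) (hu₁ : u < 1) {x : ℝ} :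
    quantile ν u ≤ x ↔ u ≤ cdf ν x :=
  ⟨fun h => (le_cdf_quantile ν hu₁).trans (monotone_cdf ν h),
    fun h => csInf_le (bddBelow_setOf_le_cdf ν hu₀) h⟩

theorem monotoneOn_quantile : MonotoneOn (quantile ν) (Ioo 0 1) := fun _ hu _ hv huv =>
  (quantile_le_iff ν hu.1 hu.2).2 (huv.trans (le_cdf_quantile ν hv.2))

theorem map_quantile [IsProbabilityMeasure ν] :
    (volume.restrict (Ioo 0 1)).map (quantile ν) = ν := by
  have hmeas : AEMeasurable (quantile ν) (volume.restrict (Ioo 0 1)) :=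
    aemeasurable_restrict_of_monotoneOn measurableSet_Ioo (monotoneOn_quantile ν)
  refine Measure.ext_of_Iic _ _ fun x => ?_
  rw [Measure.map_apply_of_aemeasurable hmeas measurableSet_Iic,
    Measure.restrict_apply' measurableSet_Ioo, ← ofReal_cdf]
  have hset : quantile ν ⁻¹' Iic x ∩ Ioo 0 1 = Iic (cdf ν x) ∩ Ioo 0 1 := by
    ext u
    simp only [mem_inter_iff, mem_preimage, mem_Iic, mem_Ioo, and_congr_left_iff]
    exact fun hu => quantile_le_iff ν hu.1 hu.2
  rw [hset]
  refine le_antisymm ?_ ?_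
  · calc volume (Iic (cdf ν x) ∩ Ioo 0 1) ≤ volume (Ioc 0 (cdf ν x)) :=
          measure_mono fun u hu => ⟨hu.2.1, hu.1⟩
      _ = ENNReal.ofReal (cdf ν x) := by rw [Real.volume_Ioc, sub_zero]
  · calc ENNReal.ofReal (cdf ν x) = volume (Ioo 0 (cdf ν x)) := by rw [Real.volume_Ioo, sub_zero]
      _ ≤ volume (Iic (cdf ν x) ∩ Ioo 0 1) :=
          measure_mono fun u hu => ⟨hu.2.le, hu.1, hu.2.trans_le (cdf_le_one ν x)⟩

theorem integrableOn_quantile_iff [IsProbabilityMeasure ν] :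
    IntegrableOn (quantile ν) (Ioo 0 1) ↔ Integrable id ν := by
  conv_rhs => rw [← map_quantile ν]
  exact (integrable_map_measure aestronglyMeasurable_id
    (aemeasurable_restrict_of_monotoneOn measurableSet_Ioo (monotoneOn_quantile ν))).symm

end ProbabilityTheory

section avgQuantile

variable {Ω : Type*} [MeasurableSpace Ω] (μ : Measure Ω) (X : Ω → ℝ)

theorem leftQuantile_eq_quantile_map [IsProbabilityMeasure μ] (hX : AEMeasurable X μ) :
    leftQuantile μ X = quantile (μ.map X) := by
  have := Measure.isProbabilityMeasure_map hX
  funext u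
  simp only [leftQuantile, quantile, cdf_eq_real, measureReal_def,
    Measure.map_apply_of_aemeasurable hX measurableSet_Iic]
  rfl

theorem integrableOn_leftQuantile [IsProbabilityMeasure μ] (hX : Integrable X μ) :
    IntegrableOn (leftQuantile μ X) (Icc 0 1) := by
  have := Measure.isProbabilityMeasure_map (μ := μ) hX.aemeasurable
  rw [leftQuantile_eq_quantile_map μ X hX.aemeasurable, integrableOn_Icc_iff_integrableOn_Ioo,
    integrableOn_quantile_iff, integrable_map_measure aestronglyMeasurable_id hX.aemeasurable]
  exact hX

theorem convexOn_intervalIntegral_leftQuantile [IsProbabilityMeasure μ] (hX : Integrable X μ) :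
    ConvexOn ℝ (Icc 0 1) fun x => ∫ u in (0 : ℝ)..x, leftQuantile μ X u :=
  (leftQuantile_eq_quantile_map μ X hX.aemeasurable ▸ monotoneOn_quantile (μ.map X))
    |>.convexOn_intervalIntegral (integrableOn_leftQuantile μ X hX)

-- Stated multiplied out so that it also covers null sets, where `avgQuantile` is `0⁻¹ * 0 = 0`
-- (the union in the theorem when `α = 0` and `r + β = 1`).
theorem measureReal_mul_avgQuantile {I : Set ℝ} (hI : volume I ≠ ⊤) :
    volume.real I * avgQuantile μ X I = ∫ u in I, leftQuantile μ X u := by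
  rcases eq_or_ne (volume.real I) 0 with h | h
  · rw [measureReal_eq_zero_iff hI] at h
    simp [avgQuantile, Measure.restrict_eq_zero.2 h]
  · rw [avgQuantile, ← measureReal_def, mul_inv_cancel_left₀ h]

variable {a b : ℝ} (hint : IntegrableOn (leftQuantile μ X) (Icc a b))
include hint

theorem mul_avgQuantile_Icc {x y : ℝ} (hx : a ≤ x) (hxy : x ≤ y) (hy : y ≤ b) :
    (y - x) * avgQuantile μ X (Icc x y)
      = (∫ u in a..y, leftQuantile μ X u) - ∫ u in a..x, leftQuantile μ X u := by
  rw [← Real.volume_real_Icc_of_le hxy, measureReal_mul_avgQuantile μ X (by simp),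
    setIntegral_Icc_eq_sub_intervalIntegral hint hx hxy hy]

theorem mul_avgQuantile_Icc_union_Icc {x y z w : ℝ} (hx : a ≤ x) (hxy : x ≤ y) (hyz : y < z)
    (hzw : z ≤ w) (hw : w ≤ b) :
    ((y - x) + (w - z)) * avgQuantile μ X (Icc x y ∪ Icc z w)
      = ((∫ u in a..y, leftQuantile μ X u) - ∫ u in a..x, leftQuantile μ X u)
        + ((∫ u in a..w, leftQuantile μ X u) - ∫ u in a..z, leftQuantile μ X u) := by
  have hdisj : Disjoint (Icc x y) (Icc z w) :=
    disjoint_left.2 fun u hu hu' => (hu.2.trans_lt hyz).not_ge hu'.1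
  rw [← Real.volume_real_Icc_of_le hxy, ← Real.volume_real_Icc_of_le hzw,
    ← measureReal_union hdisj measurableSet_Icc measure_Icc_lt_top.ne measure_Icc_lt_top.ne,
    measureReal_mul_avgQuantile μ X
      (measure_union_ne_top measure_Icc_lt_top.ne measure_Icc_lt_top.ne),
    setIntegral_union hdisj measurableSet_Icc
      (hint.mono_set (Icc_subset_Icc hx (hyz.le.trans (hzw.trans hw))))
      (hint.mono_set (Icc_subset_Icc (hx.trans (hxy.trans hyz.le)) hw)),
    setIntegral_Icc_eq_sub_intervalIntegral hint hx hxy (hyz.le.trans (hzw.trans hw)),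
    setIntegral_Icc_eq_sub_intervalIntegral hint (hx.trans (hxy.trans hyz.le)) hzw hw]

end avgQuantile

theorem stmt5 {Ω : Type*} [MeasurableSpace Ω] (μ : Measure Ω) [IsProbabilityMeasure μ]
    (X : Ω → ℝ) (hX : Integrable X μ) (r s α β : ℝ)
    (hr : 0 ≤ r) (hs : 0 < s) (hrs : r + s ≤ 1)
    (hα : 0 ≤ α) (hβ : 0 < β) (hαβ : α + β ≤ 1 - r) (hαs : α ≤ s) :
    avgQuantile μ X (Set.Icc r (r + s))
      ≤ ((1 - r - β) / s) *
          avgQuantile μ X (Set.Icc r (r + α) ∪ Set.Icc (r + α + β) 1)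
        + (1 - (1 - r - β) / s) * avgQuantile μ X (Set.Icc (r + α) (r + α + β)) := by
  set Q : ℝ → ℝ := fun x => ∫ u in (0 : ℝ)..x, leftQuantile μ X u
  have hint := integrableOn_leftQuantile μ X hX
  have h_whole : avgQuantile μ X (Icc r (r + s)) = (Q (r + s) - Q r) / s := by
    rw [eq_div_iff hs.ne', mul_comm]
    simpa using mul_avgQuantile_Icc μ X hint hr (by linarith : r ≤ r + s) hrs
  have h_union : (1 - r - β) * avgQuantile μ X (Icc r (r + α) ∪ Icc (r + α + β) 1)
      = Q (r + α) - Q r + (Q 1 - Q (r + α + β)) := by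
    convert mul_avgQuantile_Icc_union_Icc μ X hint hr (le_add_of_nonneg_right hα)
      (by linarith : r + α < r + α + β) (by linarith) le_rfl using 2
    ring
  have h_middle :
      avgQuantile μ X (Icc (r + α) (r + α + β)) = (Q (r + α + β) - Q (r + α)) / β := by
    rw [eq_div_iff hβ.ne', mul_comm]
    simpa using mul_avgQuantile_Icc μ X hint (x := r + α) (y := r + α + β) (by linarith)
      (by linarith) (by linarith)
  have h_secant : (1 - (r + s)) * (Q (r + α + β) - Q (r + α)) ≤ β * (Q 1 - Q (r + s)) := by
    simpa using (convexOn_intervalIntegral_leftQuantile μ X hX).mul_sub_le_mul_sub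
      (x₁ := r + α) (y₁ := r + α + β) (x₂ := r + s) (y₂ := 1) ⟨by linarith, by linarith⟩
      ⟨zero_le_one, le_rfl⟩ (by linarith) (by linarith) (by linarith) (by linarith)
  rw [h_whole, h_middle, div_mul_eq_mul_div, h_union]
  field_simp
  linear_combination h_secant
end

section
/- Let X₁, ..., Xₙ be integrable random variables with X = Σᵢ Xᵢ, and let β₁, ..., βₙ ∈ (0,1) with β = Σᵢ βᵢ ∈ (0,1). Then Σᵢ R_{[0,βᵢ] ∪ [1-β+βᵢ, 1]}(Xᵢ) ≥ R_{[0,β]}(X). In particular, the inf-convolution of the functionals R_{I_i} over all allocations of X is bounded below by R_{[0,β]}(X). -/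
open MeasureTheory Set Filter

/-!
The lower quantile integrals admit a Hardy–Littlewood representation: for `0 < c ≤ 1`,
`∫₀ᶜ q_Y = min {E[Y h] : 0 ≤ h ≤ 1, E h = c}`. The lower bound integrates the pointwise
inequality `min y a - a (1 - θ) ≤ y θ` at `a = q_Y(c)`; the integral of the left side equals
`∫₀ᶜ q_Y` because the quantile function pushes Lebesgue measure on `(0, 1)` forward to the law
of `Y`. The minimum is attained at `h = 1{Y < a} + θ 1{Y = a}`. Applied to `1 - t`, the same bound
gives `E[Y t] ≤ ∫_{1-e}^1 q_Y` whenever `0 ≤ t ≤ 1` and `E t = e`.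

Take minimisers `h_i` for `X_i` at level `β_i`, and a common majorant `g ≥ h_i` with `0 ≤ g ≤ 1`
and `E g = β`, which exists because `E (min (∑ h_i) 1) ≤ β`. Then `g - h_i` is a test function of
mass `β - β_i`, and

    ∫₀^β q_X ≤ E[X g] = ∑ (E[X_i h_i] + E[X_i (g - h_i)])
             ≤ ∑ (∫₀^{β_i} q_{X_i} + ∫_{1-β+β_i}^1 q_{X_i}).
-/

open ProbabilityTheory

theorem StieltjesFunction.sInf_setOf_le_le_iff (F : StieltjesFunction ℝ) {u x : ℝ}
    (hlo : ∃ y, F y < u) (hhi : ∃ y, u ≤ F y) :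
    sInf {y | u ≤ F y} ≤ x ↔ u ≤ F x := by
  have hbdd : BddBelow {y | u ≤ F y} := by
    obtain ⟨y₀, hy₀⟩ := hlo
    exact ⟨y₀, fun y hy => le_of_not_gt fun hlt => (hy.trans (F.mono hlt.le)).not_gt hy₀⟩
  refine ⟨fun hx => ?_, fun hx => csInf_le hbdd hx⟩
  have hq : u ≤ F (sInf {y | u ≤ F y}) := by
    refine ge_of_tendsto ((F.right_continuous _).mono Ioi_subset_Ici_self) ?_
    filter_upwards [self_mem_nhdsWithin] with y hy
    obtain ⟨s, hs, hsy⟩ := exists_lt_of_csInf_lt hhi hy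
    exact le_trans hs (F.mono hsy.le)
  exact hq.trans (F.mono hx)

theorem exists_mem_Icc_add_mul_eq {p r c : ℝ} (hp : p ≤ c) (hc : c ≤ p + r) :
    ∃ θ ∈ Icc (0 : ℝ) 1, p + θ * r = c := by
  have := intermediate_value_Icc zero_le_one
    (f := fun θ : ℝ => p + θ * r) (by fun_prop) ⟨by simpa using hp, by simpa using hc⟩
  simpa using this

theorem min_sub_mul_le_mul {y a θ : ℝ} (hθ : θ ∈ Icc (0 : ℝ) 1) :
    min y a - a * (1 - θ) ≤ y * θ := by
  rcases le_total y a with h | h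
  · rw [min_eq_left h]; nlinarith [hθ.2]
  · rw [min_eq_right h]; nlinarith [hθ.1]

theorem measureReal_singleton_eq_cdf_sub_leftLim (ν : Measure ℝ) [IsProbabilityMeasure ν]
    (a : ℝ) : ν.real {a} = cdf ν a - Function.leftLim (cdf ν) a := by
  have h := (cdf ν).measure_singleton a
  rw [measure_cdf] at h
  rw [measureReal_def, h, ENNReal.toReal_ofReal (sub_nonneg.2 ((cdf ν).mono.leftLim_le le_rfl))]

theorem measureReal_Iio_eq_leftLim_cdf (ν : Measure ℝ) [IsProbabilityMeasure ν] (a : ℝ) :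
    ν.real (Iio a) = Function.leftLim (cdf ν) a := by
  rw [← Iic_sdiff_right, measureReal_sdiff (singleton_subset_iff.2 (mem_Iic.2 le_rfl))
    (measurableSet_singleton a), measureReal_singleton_eq_cdf_sub_leftLim, ← cdf_eq_real]
  ring

noncomputable def lowerTailWeight (a θ : ℝ) : ℝ → ℝ :=
  (Iio a).indicator (fun _ => 1) + ({a} : Set ℝ).indicator fun _ => θ

theorem lowerTailWeight_of_lt {a θ y : ℝ} (hy : y < a) : lowerTailWeight a θ y = 1 := by
  simp [lowerTailWeight, hy, hy.ne]

theorem lowerTailWeight_self (a θ : ℝ) : lowerTailWeight a θ a = θ := by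
  simp [lowerTailWeight]

theorem lowerTailWeight_of_gt {a θ y : ℝ} (hy : a < y) : lowerTailWeight a θ y = 0 := by
  simp [lowerTailWeight, hy.not_gt, hy.ne']

theorem measurable_lowerTailWeight (a θ : ℝ) : Measurable (lowerTailWeight a θ) :=
  (measurable_const.indicator measurableSet_Iio).add
    (measurable_const.indicator (measurableSet_singleton a))

theorem lowerTailWeight_mem_Icc {a θ : ℝ} (hθ : θ ∈ Icc (0 : ℝ) 1) (y : ℝ) :
    lowerTailWeight a θ y ∈ Icc (0 : ℝ) 1 := by
  rcases lt_trichotomy y a with hy | rfl | hy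
  · simp [lowerTailWeight_of_lt hy]
  · rwa [lowerTailWeight_self]
  · simp [lowerTailWeight_of_gt hy]

theorem mul_lowerTailWeight (a θ y : ℝ) :
    y * lowerTailWeight a θ y = min y a - a * (1 - lowerTailWeight a θ y) := by
  rcases lt_trichotomy y a with hy | rfl | hy
  · rw [lowerTailWeight_of_lt hy, min_eq_left hy.le]; ring
  · rw [min_self]; ring
  · rw [lowerTailWeight_of_gt hy, min_eq_right hy.le]; ring

theorem integral_lowerTailWeight (ν : Measure ℝ) [IsProbabilityMeasure ν] (a θ : ℝ) :
    ∫ y, lowerTailWeight a θ y ∂ν =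
      Function.leftLim (cdf ν) a + θ * (cdf ν a - Function.leftLim (cdf ν) a) := by
  simp only [lowerTailWeight, Pi.add_apply]
  rw [integral_add ((integrable_const 1).indicator measurableSet_Iio)
      ((integrable_const θ).indicator (measurableSet_singleton a)),
    integral_indicator_const _ measurableSet_Iio,
    integral_indicator_const _ (measurableSet_singleton a),
    measureReal_Iio_eq_leftLim_cdf, measureReal_singleton_eq_cdf_sub_leftLim,
    smul_eq_mul, smul_eq_mul, mul_one, mul_comm]

section Quantile

variable {Ω : Type*} [MeasurableSpace Ω] {μ : Measure Ω} {Y : Ω → ℝ}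

theorem integrable_mul_of_mem_Icc (hY : Integrable Y μ) {h : Ω → ℝ}
    (hh : AEStronglyMeasurable h μ) (h01 : ∀ ω, h ω ∈ Icc (0 : ℝ) 1) :
    Integrable (fun ω => Y ω * h ω) μ :=
  hY.mul_bdd hh (c := 1) (.of_forall fun ω => by
    rw [Real.norm_eq_abs, abs_le]; exact ⟨by linarith [(h01 ω).1], (h01 ω).2⟩)

theorem avgQuantile_Icc_zero {c : ℝ} (hc : 0 < c) :
    avgQuantile μ Y (Icc 0 c) = c⁻¹ * ∫ u in 0..c, leftQuantile μ Y u := by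
  rw [avgQuantile, Real.volume_Icc, sub_zero, ENNReal.toReal_ofReal hc.le,
    integral_Icc_eq_integral_Ioc, intervalIntegral.integral_of_le hc.le]

variable [IsProbabilityMeasure μ]

theorem leftQuantile_eq_sInf_cdf (hY : AEMeasurable Y μ) (u : ℝ) :
    leftQuantile μ Y u = sInf {x | u ≤ cdf (μ.map Y) x} := by
  have := Measure.isProbabilityMeasure_map hY
  simp_rw [cdf_eq_real, measureReal_def, Measure.map_apply_of_aemeasurable hY measurableSet_Iic]
  rfl

theorem leftQuantile_le_iff (hY : AEMeasurable Y μ) {u x : ℝ} (hu : u ∈ Ioo 0 1) :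
    leftQuantile μ Y u ≤ x ↔ u ≤ cdf (μ.map Y) x := by
  have := Measure.isProbabilityMeasure_map hY
  rw [leftQuantile_eq_sInf_cdf hY]
  exact StieltjesFunction.sInf_setOf_le_le_iff _
    ((tendsto_cdf_atBot _).eventually_lt_const hu.1).exists
    ((tendsto_cdf_atTop _).eventually_const_le hu.2).exists

theorem le_cdf_leftQuantile (hY : AEMeasurable Y μ) {u : ℝ} (hu : u ∈ Ioo 0 1) :
    u ≤ cdf (μ.map Y) (leftQuantile μ Y u) :=
  (leftQuantile_le_iff hY hu).1 le_rfl

theorem monotoneOn_leftQuantile (hY : AEMeasurable Y μ) :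
    MonotoneOn (leftQuantile μ Y) (Ioo 0 1) := fun _ hu _ hv huv =>
  (leftQuantile_le_iff hY hu).2 (huv.trans (le_cdf_leftQuantile hY hv))

-- Off `(0, 1)` the quantile takes junk values (`sInf` of `ℝ` or of `∅`), so only its restriction
-- to `(0, 1)` is monotone and transports Lebesgue measure to the law of `Y`.
theorem aemeasurable_leftQuantile (hY : AEMeasurable Y μ) :
    AEMeasurable (leftQuantile μ Y) (volume.restrict (Ioo 0 1)) :=
  aemeasurable_restrict_of_monotoneOn measurableSet_Ioo (monotoneOn_leftQuantile hY)

theorem map_leftQuantile (hY : AEMeasurable Y μ) :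
    (volume.restrict (Ioo 0 1)).map (leftQuantile μ Y) = μ.map Y := by
  have := Measure.isProbabilityMeasure_map hY
  refine Measure.ext_of_Iic _ _ fun x => ?_
  have hpre : leftQuantile μ Y ⁻¹' Iic x ∩ Ioo 0 1 = Ioo 0 1 ∩ Iic (cdf (μ.map Y) x) := by
    ext u
    simp only [mem_inter_iff, mem_preimage, mem_Iic]
    exact ⟨fun h => ⟨h.2, (leftQuantile_le_iff hY h.2).1 h.1⟩,
      fun h => ⟨(leftQuantile_le_iff hY h.1).2 h.2, h.1⟩⟩
  rw [Measure.map_apply_of_aemeasurable (aemeasurable_leftQuantile hY) measurableSet_Iic,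
    Measure.restrict_apply' measurableSet_Ioo, hpre,
    measure_congr ((Ioo_ae_eq_Ioc (μ := volume)).inter (ae_eq_refl (Iic _))), Ioc_inter_Iic,
    Real.volume_Ioc, min_eq_right (cdf_le_one _ x), sub_zero, ofReal_cdf]

theorem integral_comp_leftQuantile (hY : AEMeasurable Y μ) {f : ℝ → ℝ} (hf : Measurable f) :
    ∫ u in 0..1, f (leftQuantile μ Y u) = ∫ ω, f (Y ω) ∂μ := by
  rw [intervalIntegral.integral_of_le zero_le_one, integral_Ioc_eq_integral_Ioo,
    ← integral_map (aemeasurable_leftQuantile hY) hf.aestronglyMeasurable,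
    map_leftQuantile hY, integral_map hY hf.aestronglyMeasurable]

theorem intervalIntegrable_comp_leftQuantile (hY : AEMeasurable Y μ) {f : ℝ → ℝ}
    (hf : Measurable f) (hfY : Integrable (fun ω => f (Y ω)) μ) {a b : ℝ}
    (ha : a ∈ Icc 0 1) (hb : b ∈ Icc 0 1) :
    IntervalIntegrable (fun u => f (leftQuantile μ Y u)) volume a b := by
  rw [← uIcc_of_le zero_le_one] at ha hb
  refine IntervalIntegrable.mono_set ?_ (uIcc_subset_uIcc ha hb)
  rw [intervalIntegrable_iff_integrableOn_Ioo_of_le zero_le_one]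
  refine (integrable_map_measure hf.aestronglyMeasurable (aemeasurable_leftQuantile hY)).1 ?_
  rwa [map_leftQuantile hY, integrable_map_measure hf.aestronglyMeasurable hY]

theorem intervalIntegral_leftQuantile_zero_one (hY : AEMeasurable Y μ) :
    ∫ u in 0..1, leftQuantile μ Y u = ∫ ω, Y ω ∂μ :=
  integral_comp_leftQuantile hY measurable_id'

theorem intervalIntegrable_leftQuantile (hY : Integrable Y μ) {a b : ℝ} (ha : a ∈ Icc 0 1)
    (hb : b ∈ Icc 0 1) : IntervalIntegrable (leftQuantile μ Y) volume a b :=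
  intervalIntegrable_comp_leftQuantile hY.aemeasurable measurable_id' hY ha hb

theorem integral_min_sub_mul (hY : Integrable Y μ) {h : Ω → ℝ} (hh : Integrable h μ) (a : ℝ) :
    ∫ ω, (min (Y ω) a - a * (1 - h ω)) ∂μ = ∫ ω, min (Y ω) a ∂μ - a * (1 - ∫ ω, h ω ∂μ) := by
  have hmin : Integrable (fun ω => min (Y ω) a) μ := hY.inf (integrable_const a)
  have hsub : Integrable (fun ω => 1 - h ω) μ := (integrable_const 1).sub hh
  rw [integral_sub hmin (hsub.const_mul a), integral_const_mul,
    integral_sub (integrable_const 1) hh]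
  simp

theorem intervalIntegral_leftQuantile_eq (hY : Integrable Y μ) {c : ℝ} (hc : c ∈ Ioo 0 1) :
    ∫ u in 0..c, leftQuantile μ Y u =
      ∫ ω, min (Y ω) (leftQuantile μ Y c) ∂μ - leftQuantile μ Y c * (1 - c) := by
  set a := leftQuantile μ Y c
  have hQ := monotoneOn_leftQuantile hY.aemeasurable
  have hf : Measurable fun y : ℝ => min y a := by fun_prop
  have hlow : ∫ u in 0..c, min (leftQuantile μ Y u) a = ∫ u in 0..c, leftQuantile μ Y u := by
    rw [intervalIntegral.integral_of_le hc.1.le, intervalIntegral.integral_of_le hc.1.le]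
    exact setIntegral_congr_fun measurableSet_Ioc fun u hu =>
      min_eq_left (hQ ⟨hu.1, hu.2.trans_lt hc.2⟩ hc hu.2)
  have hhigh : ∫ u in c..1, min (leftQuantile μ Y u) a = ∫ _ in c..1, a := by
    rw [intervalIntegral.integral_of_le hc.2.le, intervalIntegral.integral_of_le hc.2.le,
      integral_Ioc_eq_integral_Ioo, integral_Ioc_eq_integral_Ioo]
    exact setIntegral_congr_fun measurableSet_Ioo fun u hu =>
      min_eq_right (hQ hc ⟨hc.1.trans hu.1, hu.2⟩ hu.1.le)
  have hmin : Integrable (fun ω => min (Y ω) a) μ := hY.inf (integrable_const a)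
  have hc' : c ∈ Icc (0 : ℝ) 1 := Ioo_subset_Icc_self hc
  have hsplit := intervalIntegral.integral_add_adjacent_intervals
    (intervalIntegrable_comp_leftQuantile hY.aemeasurable hf hmin (left_mem_Icc.2 zero_le_one) hc')
    (intervalIntegrable_comp_leftQuantile hY.aemeasurable hf hmin hc' (right_mem_Icc.2 zero_le_one))
  rw [hlow, hhigh, intervalIntegral.integral_const, smul_eq_mul,
    integral_comp_leftQuantile hY.aemeasurable hf] at hsplit
  linarith

theorem intervalIntegral_leftQuantile_le_integral_mul (hY : Integrable Y μ) {c : ℝ}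
    (hc : c ∈ Ioc 0 1) {h : Ω → ℝ} (hh : Integrable h μ) (h01 : ∀ ω, h ω ∈ Icc (0 : ℝ) 1)
    (hhc : ∫ ω, h ω ∂μ = c) :
    ∫ u in 0..c, leftQuantile μ Y u ≤ ∫ ω, Y ω * h ω ∂μ := by
  rcases hc.2.lt_or_eq with hc1 | rfl
  · set a := leftQuantile μ Y c
    calc ∫ u in 0..c, leftQuantile μ Y u = ∫ ω, (min (Y ω) a - a * (1 - h ω)) ∂μ := by
          rw [integral_min_sub_mul hY hh, hhc, intervalIntegral_leftQuantile_eq hY ⟨hc.1, hc1⟩]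
      _ ≤ ∫ ω, Y ω * h ω ∂μ :=
          integral_mono ((hY.inf (integrable_const a)).sub
            (((integrable_const 1).sub hh).const_mul a))
            (integrable_mul_of_mem_Icc hY hh.1 h01) fun ω => min_sub_mul_le_mul (h01 ω)
  · have h1 : ∀ᵐ ω ∂μ, h ω = 1 := by
      have hnonneg : 0 ≤ fun ω => 1 - h ω := fun ω => sub_nonneg.2 (h01 ω).2
      have hzero : ∫ ω, (1 - h ω) ∂μ = 0 := by
        rw [integral_sub (integrable_const 1) hh, hhc]; simp
      filter_upwards [(integral_eq_zero_iff_of_nonneg hnonneg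
        ((integrable_const 1).sub hh)).1 hzero] with ω hω
      simp only [Pi.zero_apply] at hω
      linarith
    rw [intervalIntegral_leftQuantile_zero_one hY.aemeasurable]
    exact (integral_congr_ae (by filter_upwards [h1] with ω hω; simp [hω])).le

theorem integral_mul_le_intervalIntegral_leftQuantile (hY : Integrable Y μ) {d : ℝ}
    (hd : d ∈ Ioc 0 1) {t : Ω → ℝ} (ht : Integrable t μ) (t01 : ∀ ω, t ω ∈ Icc (0 : ℝ) 1)
    (htd : ∫ ω, t ω ∂μ = 1 - d) :
    ∫ ω, Y ω * t ω ∂μ ≤ ∫ u in d..1, leftQuantile μ Y u := by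
  have hbottom := intervalIntegral_leftQuantile_le_integral_mul hY hd
    (h := fun ω => 1 - t ω) ((integrable_const 1).sub ht)
    (fun ω => ⟨sub_nonneg.2 (t01 ω).2, sub_le_self _ (t01 ω).1⟩)
    (by rw [integral_sub (integrable_const 1) ht, htd]; simp)
  have hd' : d ∈ Icc (0 : ℝ) 1 := Ioc_subset_Icc_self hd
  have hsplit := intervalIntegral.integral_add_adjacent_intervals
    (intervalIntegrable_leftQuantile hY (left_mem_Icc.2 zero_le_one) hd')
    (intervalIntegrable_leftQuantile hY hd' (right_mem_Icc.2 zero_le_one))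
  rw [intervalIntegral_leftQuantile_zero_one hY.aemeasurable] at hsplit
  have hsub : ∫ ω, Y ω * (1 - t ω) ∂μ = ∫ ω, Y ω ∂μ - ∫ ω, Y ω * t ω ∂μ := by
    simp_rw [mul_one_sub]
    exact integral_sub hY (integrable_mul_of_mem_Icc hY ht.1 t01)
  linarith

theorem exists_integral_mul_eq_intervalIntegral_leftQuantile (hY : Integrable Y μ) {c : ℝ}
    (hc : c ∈ Ioo 0 1) :
    ∃ h : Ω → ℝ, Integrable h μ ∧ (∀ ω, h ω ∈ Icc (0 : ℝ) 1) ∧ ∫ ω, h ω ∂μ = c ∧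
      ∫ ω, Y ω * h ω ∂μ = ∫ u in 0..c, leftQuantile μ Y u := by
  have := Measure.isProbabilityMeasure_map hY.aemeasurable
  set F := cdf (μ.map Y)
  set a := leftQuantile μ Y c
  have hL : Function.leftLim F a ≤ c := by
    refine le_of_tendsto (F.mono.tendsto_leftLim a) ?_
    filter_upwards [self_mem_nhdsWithin] with x hx
    exact le_of_not_ge fun h => not_le.2 hx ((leftQuantile_le_iff hY.aemeasurable hc).2 h)
  obtain ⟨θ, hθ, hθc⟩ := exists_mem_Icc_add_mul_eq hL
    (r := F a - Function.leftLim F a) (by linarith [le_cdf_leftQuantile hY.aemeasurable hc])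
  set h := fun ω => lowerTailWeight a θ (Y ω)
  have hmeas : Measurable (lowerTailWeight a θ) := measurable_lowerTailWeight a θ
  have hh : Integrable h μ :=
    .of_bound (hmeas.comp_aemeasurable hY.aemeasurable).aestronglyMeasurable 1
      (.of_forall fun ω => by
        obtain ⟨h0, h1⟩ := lowerTailWeight_mem_Icc hθ (Y ω)
        rwa [Real.norm_eq_abs, abs_of_nonneg h0])
  have hhc : ∫ ω, h ω ∂μ = c := by
    rw [← integral_map hY.aemeasurable hmeas.aestronglyMeasurable,
      integral_lowerTailWeight, hθc]
  refine ⟨h, hh, fun ω => lowerTailWeight_mem_Icc hθ (Y ω), hhc, ?_⟩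
  rw [integral_congr_ae (.of_forall fun ω => mul_lowerTailWeight a θ (Y ω)),
    integral_min_sub_mul hY hh, hhc, intervalIntegral_leftQuantile_eq hY hc]

theorem exists_ge_integral_eq {G : Ω → ℝ} (hG : Integrable G μ)
    (G01 : ∀ ω, G ω ∈ Icc (0 : ℝ) 1) {c : ℝ} (hGc : ∫ ω, G ω ∂μ ≤ c) (hc : c ≤ 1) :
    ∃ g : Ω → ℝ, Integrable g μ ∧ (∀ ω, g ω ∈ Icc (0 : ℝ) 1) ∧ ∫ ω, g ω ∂μ = c ∧
      ∀ ω, G ω ≤ g ω := by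
  obtain ⟨θ, ⟨hθ0, hθ1⟩, hθc⟩ := exists_mem_Icc_add_mul_eq hGc (r := 1 - ∫ ω, G ω ∂μ)
    (by linarith)
  have hsub : Integrable (fun ω => 1 - G ω) μ := (integrable_const 1).sub hG
  refine ⟨fun ω => G ω + θ * (1 - G ω), hG.add (hsub.const_mul θ), fun ω => ?_, ?_,
    fun ω => le_add_of_nonneg_right (mul_nonneg hθ0 (sub_nonneg.2 (G01 ω).2))⟩
  · obtain ⟨h0, h1⟩ := G01 ω
    constructor <;> nlinarith
  · rw [integral_add hG (hsub.const_mul θ), integral_const_mul,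
      integral_sub (integrable_const 1) hG]
    simpa using hθc

theorem exists_common_majorant_integral_eq {ι : Type*} [Fintype ι] {h : ι → Ω → ℝ}
    (hh : ∀ i, Integrable (h i) μ) (h01 : ∀ i ω, h i ω ∈ Icc (0 : ℝ) 1) {c : ℝ}
    (hc : ∑ i, ∫ ω, h i ω ∂μ ≤ c) (hc1 : c ≤ 1) :
    ∃ g : Ω → ℝ, Integrable g μ ∧ (∀ ω, g ω ∈ Icc (0 : ℝ) 1) ∧ ∫ ω, g ω ∂μ = c ∧
      ∀ i ω, h i ω ≤ g ω := by
  have hsum : Integrable (fun ω => ∑ i, h i ω) μ := integrable_finsetSum _ fun i _ => hh i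
  have hmin : Integrable (fun ω => min (∑ i, h i ω) 1) μ := hsum.inf (integrable_const 1)
  have hle : ∫ ω, min (∑ i, h i ω) 1 ∂μ ≤ c :=
    calc ∫ ω, min (∑ i, h i ω) 1 ∂μ ≤ ∫ ω, ∑ i, h i ω ∂μ :=
          integral_mono hmin hsum fun ω => min_le_left _ _
      _ = ∑ i, ∫ ω, h i ω ∂μ := integral_finsetSum _ fun i _ => hh i
      _ ≤ c := hc
  obtain ⟨g, hg, g01, hgc, hGg⟩ := exists_ge_integral_eq hmin
    (fun ω => ⟨le_min (Finset.sum_nonneg fun i _ => (h01 i ω).1) zero_le_one, min_le_right _ _⟩)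
    hle hc1
  refine ⟨g, hg, g01, hgc, fun i ω => le_trans ?_ (hGg ω)⟩
  exact le_min (Finset.single_le_sum (fun j _ => (h01 j ω).1) (Finset.mem_univ i)) (h01 i ω).2

theorem avgQuantile_Icc_union_Icc (hY : Integrable Y μ) {a c : ℝ} (ha : 0 ≤ a) (hac : a ≤ c)
    (hc : c < 1) :
    avgQuantile μ Y (Icc 0 a ∪ Icc (1 - c + a) 1) =
      c⁻¹ * ((∫ u in 0..a, leftQuantile μ Y u) + ∫ u in (1 - c + a)..1, leftQuantile μ Y u) := by
  have hae : (Icc 0 a ∪ Icc (1 - c + a) 1 : Set ℝ) =ᵐ[volume]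
      (Ioc 0 a ∪ Ioc (1 - c + a) 1 : Set ℝ) :=
    Ioc_ae_eq_Icc.symm.union Ioc_ae_eq_Icc.symm
  have hdisj : Disjoint (Ioc 0 a) (Ioc (1 - c + a) 1) := Ioc_disjoint_Ioc_of_le (by linarith)
  have ha1 : a ∈ Icc (0 : ℝ) 1 := ⟨ha, by linarith⟩
  have hb1 : 1 - c + a ∈ Icc (0 : ℝ) 1 := ⟨by linarith, by linarith⟩
  rw [avgQuantile, measure_congr hae, setIntegral_congr_set hae,
    measure_union hdisj measurableSet_Ioc, Real.volume_Ioc, Real.volume_Ioc,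
    ENNReal.toReal_add ENNReal.ofReal_ne_top ENNReal.ofReal_ne_top,
    ENNReal.toReal_ofReal (by linarith), ENNReal.toReal_ofReal (by linarith),
    setIntegral_union hdisj measurableSet_Ioc
      (intervalIntegrable_leftQuantile hY (left_mem_Icc.2 zero_le_one) ha1).1
      (intervalIntegrable_leftQuantile hY hb1 (right_mem_Icc.2 zero_le_one)).1,
    intervalIntegral.integral_of_le ha, intervalIntegral.integral_of_le hb1.2]
  congr 2
  ring

theorem intervalIntegral_leftQuantile_sum_le {ι : Type*} [Fintype ι] {X : ι → Ω → ℝ}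
    (hX : ∀ i, Integrable (X i) μ) {β : ι → ℝ} (hβ : ∀ i, β i ∈ Ioo (0 : ℝ) 1) {B : ℝ}
    (hBdef : B = ∑ i, β i) (hB : B ∈ Ioo (0 : ℝ) 1) :
    ∫ u in 0..B, leftQuantile μ (fun ω => ∑ i, X i ω) u ≤
      ∑ i, ((∫ u in 0..β i, leftQuantile μ (X i) u) +
        ∫ u in (1 - B + β i)..1, leftQuantile μ (X i) u) := by
  have hβB : ∀ i, β i ≤ B := fun i => by
    rw [hBdef]; exact Finset.single_le_sum (fun j _ => (hβ j).1.le) (Finset.mem_univ i)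
  choose h hh h01 hhβ hXh using fun i =>
    exists_integral_mul_eq_intervalIntegral_leftQuantile (hX i) (hβ i)
  obtain ⟨g, hg, g01, hgB, hhg⟩ :=
    exists_common_majorant_integral_eq hh h01 (c := B) (by simp [hhβ, hBdef]) hB.2.le
  have ht : ∀ i, Integrable (fun ω => g ω - h i ω) μ := fun i => hg.sub (hh i)
  have t01 : ∀ i ω, g ω - h i ω ∈ Icc (0 : ℝ) 1 := fun i ω =>
    ⟨sub_nonneg.2 (hhg i ω), by linarith [(g01 ω).2, (h01 i ω).1]⟩
  calc _ ≤ ∫ ω, (∑ i, X i ω) * g ω ∂μ :=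
        intervalIntegral_leftQuantile_le_integral_mul (integrable_finsetSum _ fun i _ => hX i)
          ⟨hB.1, hB.2.le⟩ hg g01 hgB
    _ = ∑ i, ∫ ω, X i ω * g ω ∂μ := by
        simp_rw [Finset.sum_mul]
        exact integral_finsetSum _ fun i _ => integrable_mul_of_mem_Icc (hX i) hg.1 g01
    _ = ∑ i, (∫ ω, X i ω * h i ω ∂μ + ∫ ω, X i ω * (g ω - h i ω) ∂μ) :=
        Finset.sum_congr rfl fun i _ => by
          rw [← integral_add (integrable_mul_of_mem_Icc (hX i) (hh i).1 (h01 i))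
            (integrable_mul_of_mem_Icc (hX i) (ht i).1 (t01 i))]
          simp only [mul_sub, add_sub_cancel]
    _ ≤ _ := Finset.sum_le_sum fun i _ => by
        rw [hXh]
        refine add_le_add le_rfl (integral_mul_le_intervalIntegral_leftQuantile (hX i)
          ⟨by linarith [hB.2, (hβ i).1], by linarith [hβB i]⟩ (ht i) (t01 i) ?_)
        rw [integral_sub hg (hh i), hgB, hhβ]
        ring

end Quantile

theorem stmt7 {Ω : Type*} [MeasurableSpace Ω] (μ : Measure Ω) [IsProbabilityMeasure μ]
    (n : ℕ) (X : Fin n → Ω → ℝ) (hX : ∀ i, Integrable (X i) μ)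
    (β : Fin n → ℝ) (hβ : ∀ i, β i ∈ Set.Ioo (0 : ℝ) 1)
    (B : ℝ) (hBdef : B = ∑ i, β i) (hB : B ∈ Set.Ioo (0 : ℝ) 1) :
    avgQuantile μ (fun ω => ∑ i, X i ω) (Set.Icc 0 B)
      ≤ ∑ i, avgQuantile μ (X i) (Set.Icc 0 (β i) ∪ Set.Icc (1 - B + β i) 1) := by
  have hβB : ∀ i, β i ≤ B := fun i => by
    rw [hBdef]; exact Finset.single_le_sum (fun j _ => (hβ j).1.le) (Finset.mem_univ i)
  rw [avgQuantile_Icc_zero hB.1]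
  simp_rw [avgQuantile_Icc_union_Icc (hX _) (hβ _).1.le (hβB _) hB.2, ← Finset.mul_sum]
  exact mul_le_mul_of_nonneg_left (intervalIntegral_leftQuantile_sum_le hX hβ hBdef hB)
    (inv_nonneg.2 hB.1.le)
end

section
/- Let X be an integrable random variable, β₁, ..., βₙ ∈ (0,1) with β = Σᵢβᵢ ∈ (0,1), and m ≥ max(q_β^-(X), max_i q_{1-β+βᵢ}^-(X), 0). With A = {U_X ≤ β}, partition (A₁,...,Aₙ) of A with P(Aᵢ)=βᵢ, and Xᵢ^{(m)} = (X-m)1_{Aᵢ} + (X/n)1_{Aᶜ} + (m/(n-1))1_{A\Aᵢ}, we have Σᵢ R_{[0,βᵢ]∪[1-β+βᵢ,1]}(Xᵢ^{(m)}) = R_{[0,β]}(X) + (1/β)·E[(X - a_m)·1_{X > a_m}], where a_m = nm/(n-1). -/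
/-
The left-quantile function `u ↦ q_u(Z)` pushes Lebesgue measure on `(0, 1)` forward to the law
of `Z`, so `∫₀¹ q_u(Z) du = E Z`. Since `q_u(min Z c) = min (q_u Z) c` and
`q_u(max Z c) = max (q_u Z) c`, if `c` is a `b`-quantile of `Z` then
`∫₀^b q_u(Z) du = E[min Z c] - (1 - b) c` and `∫_b^1 q_u(Z) du = E[max Z c] - b c`.

For `Y = X_i^{(m)}`, the value `q_β(X) - m` is a `βᵢ`-quantile of `Y` cutting out exactly `Aᵢ`,
so `∫₀^{βᵢ} q_u(Y) du = E[(X - m) 1_{Aᵢ}]`. Because `m ≥ q_{1-β+βᵢ}(X)`, the tail `{X > a_m}`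
has probability at most `β - βᵢ`, which makes `m / (n - 1)` a `(1 - β + βᵢ)`-quantile of `Y`;
moreover `max Y (m / (n - 1)) = m / (n - 1) + (X - a_m)⁺ / n` almost surely. Summing over `i`,
the constants cancel because `∑ᵢ (β - βᵢ) = (n - 1) β`, and
`∑ᵢ E[(X - m) 1_{Aᵢ}] + m β = E[X 1_A] = β R_{[0,β]}(X)`.
-/

open MeasureTheory Set Filter

open ProbabilityTheory Topology

lemma MeasureTheory.measureReal_mono_ae {α : Type*} [MeasurableSpace α] {μ : Measure α}
    [IsFiniteMeasure μ] {s t : Set α} (h : s ≤ᵐ[μ] t) : μ.real s ≤ μ.real t :=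
  ENNReal.toReal_mono (measure_ne_top μ t) (measure_mono_ae h)

lemma Finset.single_lt_sum_of_pos {ι : Type*} [Fintype ι] [Nontrivial ι] {f : ι → ℝ}
    (hf : ∀ i, 0 < f i) (i : ι) : f i < ∑ j, f j := by
  obtain ⟨j, hji⟩ := exists_ne i
  exact Finset.single_lt_sum hji (Finset.mem_univ i) (Finset.mem_univ j) (hf j)
    fun k _ _ => (hf k).le

lemma ae_mem_Ioo_of_map_eq_uniform {Ω : Type*} [MeasurableSpace Ω] {μ : Measure Ω} {U : Ω → ℝ}
    (hU : μ.map U = volume.restrict (Icc 0 1)) :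
    ∀ᵐ ω ∂μ, U ω ∈ Ioo 0 1 := by
  have hUm : AEMeasurable U μ := .of_map_ne_zero (by simp [hU])
  refine ae_of_ae_map hUm ?_
  rw [hU, Measure.restrict_congr_set Ioo_ae_eq_Icc.symm]
  exact ae_restrict_mem measurableSet_Ioo

lemma le_mul_div_sub_one {n m : ℝ} (hn : 1 < n) (hm : 0 ≤ m) : m ≤ n * m / (n - 1) :=
  (le_div_iff₀ (by linarith)).2 (by nlinarith)

lemma setIntegral_Ioo_eq_Ioc_add_Ioo {f : ℝ → ℝ} {a b c : ℝ} (hab : a ≤ b) (hbc : b < c)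
    (hf : IntegrableOn f (Ioo a c)) :
    ∫ u in Ioo a c, f u = (∫ u in Ioc a b, f u) + ∫ u in Ioo b c, f u := by
  rw [← Ioc_union_Ioo_eq_Ioo hab hbc]
  exact setIntegral_union (Ioc_disjoint_Ioi_same.mono_right Ioo_subset_Ioi_self) measurableSet_Ioo
    (hf.mono_set (Ioc_subset_Ioo_right hbc)) (hf.mono_set (Ioo_subset_Ioo_left hab))

lemma StieltjesFunction.sInf_setOf_le_le_iff_s11 (f : StieltjesFunction ℝ)
    (hbot : Tendsto f atBot (𝓝 0)) (htop : Tendsto f atTop (𝓝 1)) {u x : ℝ}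
    (hu : u ∈ Ioo 0 1) : sInf {y | u ≤ f y} ≤ x ↔ u ≤ f x := by
  obtain ⟨y₀, hy₀⟩ := eventually_atBot.1 (hbot.eventually (gt_mem_nhds hu.1))
  have hbdd : BddBelow {y | u ≤ f y} :=
    ⟨y₀, fun y hy => le_of_not_ge fun hyy₀ => (hy₀ y hyy₀).not_ge hy⟩
  refine ⟨fun hx => ?_, fun hx => csInf_le hbdd hx⟩
  have hne : {y | u ≤ f y}.Nonempty := (htop.eventually (le_mem_nhds hu.2)).exists
  have hinf : u ≤ f (sInf {y | u ≤ f y}) := by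
    refine ge_of_tendsto ((f.right_continuous _).mono Ioi_subset_Ici_self) ?_
    filter_upwards [self_mem_nhdsWithin] with y hy
    obtain ⟨z, hz, hzy⟩ := exists_lt_of_csInf_lt hne hy
    exact hz.trans (f.mono hzy.le)
  exact hinf.trans (f.mono hx)

namespace Quantile

section LeftQuantile

variable {Ω : Type*} [MeasurableSpace Ω] {μ : Measure Ω} [IsProbabilityMeasure μ] {Z : Ω → ℝ}
  {u x c : ℝ}

lemma cdf_map (hZ : AEMeasurable Z μ) (x : ℝ) : cdf (μ.map Z) x = μ.real {ω | Z ω ≤ x} := by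
  have := Measure.isProbabilityMeasure_map (μ := μ) hZ
  rw [cdf_eq_real, map_measureReal_apply_of_aemeasurable hZ measurableSet_Iic]
  rfl

lemma leftQuantile_eq_sInf_cdf (hZ : AEMeasurable Z μ) (u : ℝ) :
    leftQuantile μ Z u = sInf {x | u ≤ cdf (μ.map Z) x} := by
  simp only [cdf_map hZ]
  rfl

lemma leftQuantile_le_iff (hZ : AEMeasurable Z μ) (hu : u ∈ Ioo 0 1) :
    leftQuantile μ Z u ≤ x ↔ u ≤ μ.real {ω | Z ω ≤ x} := by
  have := Measure.isProbabilityMeasure_map (μ := μ) hZ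
  rw [leftQuantile_eq_sInf_cdf hZ, ← cdf_map hZ]
  exact (cdf _).sInf_setOf_le_le_iff_s11 (tendsto_cdf_atBot _) (tendsto_cdf_atTop _) hu

lemma monotoneOn_leftQuantile (hZ : AEMeasurable Z μ) : MonotoneOn (leftQuantile μ Z) (Ioo 0 1) :=
  fun _ hu _ hv huv => (leftQuantile_le_iff hZ hu).2 <|
    huv.trans ((leftQuantile_le_iff hZ hv).1 le_rfl)

lemma aemeasurable_leftQuantile (hZ : AEMeasurable Z μ) :
    AEMeasurable (leftQuantile μ Z) (volume.restrict (Ioo 0 1)) :=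
  aemeasurable_restrict_of_monotoneOn measurableSet_Ioo (monotoneOn_leftQuantile hZ)

lemma map_leftQuantile (hZ : AEMeasurable Z μ) :
    (volume.restrict (Ioo 0 1)).map (leftQuantile μ Z) = μ.map Z := by
  have hq := aemeasurable_leftQuantile hZ
  have := Measure.isProbabilityMeasure_map (μ := μ) hZ
  have : IsProbabilityMeasure (volume.restrict (Ioo (0 : ℝ) 1)) := ⟨by simp⟩
  have := Measure.isProbabilityMeasure_map hq
  refine Measure.eq_of_cdf _ _ (StieltjesFunction.ext fun x => ?_)
  rw [cdf_map hZ, cdf_eq_real, map_measureReal_apply_of_aemeasurable hq measurableSet_Iic,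
    measureReal_restrict_apply' measurableSet_Ioo]
  set F := μ.real {ω | Z ω ≤ x}
  have hF : F ≤ 1 := measureReal_le_one
  have hset : leftQuantile μ Z ⁻¹' Iic x ∩ Ioo 0 1 = Ioc 0 F \ {1} := by
    ext u
    simp only [mem_inter_iff, mem_preimage, mem_Iic, Set.mem_sdiff, mem_Ioc, mem_singleton_iff]
    constructor
    · rintro ⟨hux, hu⟩
      exact ⟨⟨hu.1, (leftQuantile_le_iff hZ hu).1 hux⟩, hu.2.ne⟩
    · rintro ⟨⟨hu0, huF⟩, hu1⟩
      have hu : u ∈ Ioo 0 1 := ⟨hu0, lt_of_le_of_ne (huF.trans hF) hu1⟩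
      exact ⟨(leftQuantile_le_iff hZ hu).2 huF, hu⟩
  rw [hset, measureReal_sdiff_null (by simp [measureReal_def]) (by simp),
    Real.volume_real_Ioc_of_le measureReal_nonneg, sub_zero]

lemma integrableOn_leftQuantile (hZ : Integrable Z μ) :
    IntegrableOn (leftQuantile μ Z) (Ioo 0 1) := by
  have h := (integrable_map_measure aestronglyMeasurable_id
    (aemeasurable_leftQuantile hZ.aemeasurable)).1
  rw [map_leftQuantile hZ.aemeasurable,
    integrable_map_measure aestronglyMeasurable_id hZ.aemeasurable] at h
  exact h hZ

lemma integrableOn_Icc_leftQuantile (hZ : Integrable Z μ) :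
    IntegrableOn (leftQuantile μ Z) (Icc 0 1) :=
  (integrableOn_Icc_iff_integrableOn_Ioo).2 (integrableOn_leftQuantile hZ)

lemma integral_leftQuantile (hZ : Integrable Z μ) :
    ∫ u in Ioo 0 1, leftQuantile μ Z u = ∫ ω, Z ω ∂μ := by
  rw [← integral_map (f := fun y => y) (aemeasurable_leftQuantile hZ.aemeasurable)
    aestronglyMeasurable_id, map_leftQuantile hZ.aemeasurable,
    integral_map (f := fun y => y) hZ.aemeasurable aestronglyMeasurable_id]

lemma leftQuantile_min_const (hZ : AEMeasurable Z μ) (hu : u ∈ Ioo 0 1) :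
    leftQuantile μ (fun ω => min (Z ω) c) u = min (leftQuantile μ Z u) c := by
  refine eq_of_forall_ge_iff fun x => ?_
  rw [leftQuantile_le_iff (hZ.min aemeasurable_const) hu, min_le_iff, leftQuantile_le_iff hZ hu]
  rcases le_or_gt c x with hcx | hxc
  · simp only [hcx, or_true, iff_true]
    rw [show {ω | min (Z ω) c ≤ x} = univ from
      eq_univ_of_forall fun ω => (min_le_right _ _).trans hcx, probReal_univ]
    exact hu.2.le
  · simp only [min_le_iff, hxc.not_ge, or_false]

lemma leftQuantile_max_const (hZ : AEMeasurable Z μ) (hu : u ∈ Ioo 0 1) :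
    leftQuantile μ (fun ω => max (Z ω) c) u = max (leftQuantile μ Z u) c := by
  refine eq_of_forall_ge_iff fun x => ?_
  rw [leftQuantile_le_iff (hZ.max aemeasurable_const) hu, max_le_iff, leftQuantile_le_iff hZ hu]
  rcases le_or_gt c x with hcx | hxc
  · simp only [max_le_iff, hcx, and_true]
  · simp only [max_le_iff, hxc.not_ge, and_false, ofPred_false, measureReal_empty]
    exact iff_of_false hu.1.not_ge id

variable {b : ℝ} {S : Set Ω}

lemma le_leftQuantile_of_measureReal_lt (hZ : AEMeasurable Z μ) (hu : u ∈ Ioo 0 1)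
    (h : μ.real {ω | Z ω < c} < u) : c ≤ leftQuantile μ Z u :=
  le_of_not_gt fun hqc => h.not_ge <| ((leftQuantile_le_iff hZ hu).1 le_rfl).trans
    (measureReal_mono fun _ hω => lt_of_le_of_lt hω hqc)

lemma integral_Icc_zero_leftQuantile (hZ : Integrable Z μ) (hb : b ∈ Ioo 0 1)
    (hlt : μ.real {ω | Z ω < c} ≤ b) (hle : b ≤ μ.real {ω | Z ω ≤ c}) :
    ∫ u in Icc 0 b, leftQuantile μ Z u = ∫ ω, min (Z ω) c ∂μ - (1 - b) * c := by
  have hW : Integrable (fun ω => min (Z ω) c) μ := hZ.inf (integrable_const c)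
  have hlow : EqOn (leftQuantile μ Z) (leftQuantile μ fun ω => min (Z ω) c) (Ioc 0 b) :=
    fun u hu => by
      have hu' : u ∈ Ioo 0 1 := ⟨hu.1, hu.2.trans_lt hb.2⟩
      rw [leftQuantile_min_const hZ.aemeasurable hu',
        min_eq_left ((leftQuantile_le_iff hZ.aemeasurable hu').2 (hu.2.trans hle))]
  have hhigh : EqOn (leftQuantile μ fun ω => min (Z ω) c) (fun _ => c) (Ioo b 1) :=
    fun u hu => by
      have hu' : u ∈ Ioo 0 1 := ⟨hb.1.trans hu.1, hu.2⟩
      rw [leftQuantile_min_const hZ.aemeasurable hu', min_eq_right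
        (le_leftQuantile_of_measureReal_lt hZ.aemeasurable hu' (hlt.trans_lt hu.1))]
  have hsplit := setIntegral_Ioo_eq_Ioc_add_Ioo hb.1.le hb.2 (integrableOn_leftQuantile hW)
  rw [integral_leftQuantile hW, setIntegral_congr_fun measurableSet_Ioo hhigh, setIntegral_const,
    Real.volume_real_Ioo_of_le hb.2.le, smul_eq_mul] at hsplit
  rw [integral_Icc_eq_integral_Ioc, setIntegral_congr_fun measurableSet_Ioc hlow, hsplit]
  ring

lemma integral_Icc_one_leftQuantile (hZ : Integrable Z μ) (hb : b ∈ Ioo 0 1)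
    (hlt : μ.real {ω | Z ω < c} ≤ b) (hle : b ≤ μ.real {ω | Z ω ≤ c}) :
    ∫ u in Icc b 1, leftQuantile μ Z u = ∫ ω, max (Z ω) c ∂μ - b * c := by
  have hW : Integrable (fun ω => max (Z ω) c) μ := hZ.sup (integrable_const c)
  have hlow : EqOn (leftQuantile μ fun ω => max (Z ω) c) (fun _ => c) (Ioc 0 b) :=
    fun u hu => by
      have hu' : u ∈ Ioo 0 1 := ⟨hu.1, hu.2.trans_lt hb.2⟩
      rw [leftQuantile_max_const hZ.aemeasurable hu',
        max_eq_right ((leftQuantile_le_iff hZ.aemeasurable hu').2 (hu.2.trans hle))]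
  have hhigh : EqOn (leftQuantile μ Z) (leftQuantile μ fun ω => max (Z ω) c) (Ioo b 1) :=
    fun u hu => by
      have hu' : u ∈ Ioo 0 1 := ⟨hb.1.trans hu.1, hu.2⟩
      rw [leftQuantile_max_const hZ.aemeasurable hu', max_eq_left
        (le_leftQuantile_of_measureReal_lt hZ.aemeasurable hu' (hlt.trans_lt hu.1))]
  have hsplit := setIntegral_Ioo_eq_Ioc_add_Ioo hb.1.le hb.2 (integrableOn_leftQuantile hW)
  rw [integral_leftQuantile hW, setIntegral_congr_fun measurableSet_Ioc hlow, setIntegral_const,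
    Real.volume_real_Ioc_of_le hb.1.le, smul_eq_mul] at hsplit
  rw [integral_Icc_eq_integral_Ioo, setIntegral_congr_fun measurableSet_Ioo hhigh, hsplit]
  ring

lemma integral_Icc_leftQuantile_eq_setIntegral (hZ : Integrable Z μ) (hS : MeasurableSet S)
    (hb : μ.real S ∈ Ioo 0 1) (hle : ∀ᵐ ω ∂μ, ω ∈ S → Z ω ≤ c)
    (hge : ∀ᵐ ω ∂μ, ω ∉ S → c ≤ Z ω) :
    ∫ u in Icc 0 (μ.real S), leftQuantile μ Z u = ∫ ω in S, Z ω ∂μ := by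
  have hlt : μ.real {ω | Z ω < c} ≤ μ.real S := measureReal_mono_ae <| by
    filter_upwards [hge] with ω h hlt
    by_contra hω
    exact (h hω).not_gt hlt
  have hle' : μ.real S ≤ μ.real {ω | Z ω ≤ c} := measureReal_mono_ae <| by
    filter_upwards [hle] with ω h hω using h hω
  have hW : Integrable (fun ω => min (Z ω) c) μ := hZ.inf (integrable_const c)
  rw [integral_Icc_zero_leftQuantile hZ hb hlt hle', ← integral_add_compl hS hW,
    setIntegral_congr_ae hS (hle.mono fun ω h hω => min_eq_left (h hω)),
    setIntegral_congr_ae hS.compl (hge.mono fun ω h hω => min_eq_right (h hω)),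
    setIntegral_const, probReal_compl_eq_one_sub hS, smul_eq_mul]
  ring

lemma measureReal_lt_le_of_leftQuantile_le (hZ : AEMeasurable Z μ) {t : ℝ} (ht : t ∈ Ioo 0 1)
    (h : leftQuantile μ Z t ≤ c) : μ.real {ω | c < Z ω} ≤ 1 - t := by
  have hF := (leftQuantile_le_iff hZ ht).1 h
  have hc := probReal_compl_eq_one_sub₀
    (nullMeasurableSet_le hZ (aemeasurable_const (b := c)))
  simp only [compl_ofPred, not_le] at hc
  linarith

variable {U : Ω → ℝ} {s : ℝ}

lemma ae_le_leftQuantile_of_le (hZ : AEMeasurable Z μ)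
    (hUZ : ∀ᵐ ω ∂μ, leftQuantile μ Z (U ω) = Z ω) (hU : ∀ᵐ ω ∂μ, U ω ∈ Ioo 0 1) (hs : s < 1) :
    ∀ᵐ ω ∂μ, U ω ≤ s → Z ω ≤ leftQuantile μ Z s := by
  filter_upwards [hUZ, hU] with ω hq hUω hUs
  exact hq ▸ monotoneOn_leftQuantile hZ hUω ⟨hUω.1.trans_le hUs, hs⟩ hUs

lemma ae_leftQuantile_le_of_lt (hZ : AEMeasurable Z μ)
    (hUZ : ∀ᵐ ω ∂μ, leftQuantile μ Z (U ω) = Z ω) (hU : ∀ᵐ ω ∂μ, U ω ∈ Ioo 0 1) (hs : 0 < s) :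
    ∀ᵐ ω ∂μ, s < U ω → leftQuantile μ Z s ≤ Z ω := by
  filter_upwards [hUZ, hU] with ω hq hUω hsU
  exact hq ▸ monotoneOn_leftQuantile hZ ⟨hs, hsU.trans hUω.2⟩ hUω hsU.le

end LeftQuantile

section Allocation

variable {Ω : Type*} {X : Ω → ℝ} {S A : Set Ω} {n : ℕ} {m q : ℝ} {ω : Ω}

/-- The paper's `X_i^{(m)}`, with `S = {U_X ≤ β}` and `A = Aᵢ`. -/
noncomputable def allocation (X : Ω → ℝ) (S A : Set Ω) (n : ℕ) (m : ℝ) : Ω → ℝ := fun ω =>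
  A.indicator (fun ω' => X ω' - m) ω + Sᶜ.indicator (fun ω' => X ω' / n) ω
    + (S \ A).indicator (fun _ => m / (n - 1)) ω

lemma allocation_of_mem (hAS : A ⊆ S) (hω : ω ∈ A) : allocation X S A n m ω = X ω - m := by
  simp [allocation, hω, hAS hω]

lemma allocation_of_mem_sdiff (hω : ω ∈ S \ A) : allocation X S A n m ω = m / (n - 1) := by
  simp [allocation, hω.1, hω.2]

lemma allocation_of_notMem (hAS : A ⊆ S) (hω : ω ∉ S) : allocation X S A n m ω = X ω / n := by
  have hωA : ω ∉ A := fun h => hω (hAS h)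
  simp [allocation, hω, hωA]

variable [MeasurableSpace Ω] {μ : Measure Ω}

lemma allocation_le_of_mem (hAS : A ⊆ S) (hn : 1 < n) (hm : 0 ≤ m) (hqm : q ≤ m)
    (hXS : ∀ᵐ ω ∂μ, ω ∈ S → X ω ≤ q) :
    ∀ᵐ ω ∂μ, ω ∈ S → allocation X S A n m ω ≤ m / (n - 1) := by
  have hn' : (1 : ℝ) < n := by exact_mod_cast hn
  filter_upwards [hXS] with ω h hωS
  by_cases hωA : ω ∈ A
  · rw [allocation_of_mem hAS hωA]
    exact (by linarith [h hωS] : X ω - m ≤ 0).trans (div_nonneg hm (by linarith))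
  · exact (allocation_of_mem_sdiff ⟨hωS, hωA⟩).le

variable [IsProbabilityMeasure μ]

lemma integrable_allocation (hX : Integrable X μ) (hS : MeasurableSet S) (hA : MeasurableSet A) :
    Integrable (allocation X S A n m) μ :=
  (((hX.sub (integrable_const m)).indicator hA).add ((hX.div_const _).indicator hS.compl)).add
    ((integrable_const _).indicator (hS.diff hA))

lemma integral_Icc_zero_leftQuantile_allocation (hX : Integrable X μ) (hS : MeasurableSet S)
    (hA : MeasurableSet A) (hAS : A ⊆ S) (hn : 1 < n) (hm : 0 ≤ m) (hqm : q ≤ m)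
    (hXS : ∀ᵐ ω ∂μ, ω ∈ S → X ω ≤ q) (hXSc : ∀ᵐ ω ∂μ, ω ∉ S → q ≤ X ω)
    (hμA : μ.real A ∈ Ioo 0 1) :
    ∫ u in Icc 0 (μ.real A), leftQuantile μ (allocation X S A n m) u
      = ∫ ω in A, (X ω - m) ∂μ := by
  have hn' : (1 : ℝ) < n := by exact_mod_cast hn
  rw [integral_Icc_leftQuantile_eq_setIntegral (c := q - m) (integrable_allocation hX hS hA) hA
    hμA, setIntegral_congr_fun hA fun ω hω => allocation_of_mem hAS hω]
  · filter_upwards [hXS] with ω h hω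
    rw [allocation_of_mem hAS hω]
    linarith [h (hAS hω)]
  · filter_upwards [hXSc] with ω h hω
    by_cases hωS : ω ∈ S
    · rw [allocation_of_mem_sdiff ⟨hωS, hω⟩]
      exact (sub_nonpos.2 hqm).trans (div_nonneg hm (by linarith))
    · rw [allocation_of_notMem hAS hωS, le_div_iff₀ (by linarith)]
      nlinarith [h hωS]

lemma integral_max_allocation (hX : Integrable X μ) (hAS : A ⊆ S) (hn : 1 < n) (hm : 0 ≤ m)
    (hqm : q ≤ m) (hXS : ∀ᵐ ω ∂μ, ω ∈ S → X ω ≤ q) :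
    ∫ ω, max (allocation X S A n m ω) (m / (n - 1)) ∂μ
      = m / (n - 1) + (∫ ω in {ω | n * m / (n - 1) < X ω}, (X ω - n * m / (n - 1)) ∂μ) / n := by
  have hn' : (1 : ℝ) < n := by exact_mod_cast hn
  set c := m / ((n : ℝ) - 1)
  set a := n * m / ((n : ℝ) - 1)
  have hac : a = n * c := mul_div_assoc _ _ _
  have hma : m ≤ a := le_mul_div_sub_one hn' hm
  have hs : NullMeasurableSet {ω | a < X ω} μ :=
    nullMeasurableSet_lt aemeasurable_const hX.aemeasurable
  have hpt : (fun ω => max (allocation X S A n m ω) c)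
      =ᵐ[μ] fun ω => c + {ω | a < X ω}.indicator (fun ω => (X ω - a) / n) ω := by
    filter_upwards [hXS, allocation_le_of_mem hAS hn hm hqm hXS] with ω hXω hYω
    by_cases hωS : ω ∈ S
    · have hXa : ¬ a < X ω := by linarith [hXω hωS]
      rw [max_eq_right (hYω hωS), indicator_of_notMem (show ω ∉ {ω | a < X ω} from hXa),
        add_zero]
    · rw [allocation_of_notMem hAS hωS]
      by_cases hXa : a < X ω
      · rw [indicator_of_mem (show ω ∈ {ω | a < X ω} from hXa),
          max_eq_left ((le_div_iff₀ (by linarith)).2 (by linarith)), hac]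
        field_simp
        ring
      · rw [indicator_of_notMem (show ω ∉ {ω | a < X ω} from hXa),
          max_eq_right ((div_le_iff₀ (by linarith)).2 (by linarith)), add_zero]
  have hint : Integrable (fun ω => (X ω - a) / n) μ := (hX.sub (integrable_const a)).div_const _
  rw [integral_congr_ae hpt, integral_add (integrable_const c) (hint.indicator₀ hs),
    integral_indicator₀ hs, integral_const, probReal_univ, one_smul, integral_div]

lemma integral_Icc_one_leftQuantile_allocation (hX : Integrable X μ) (hS : MeasurableSet S)
    (hA : MeasurableSet A) (hAS : A ⊆ S) (hn : 1 < n) (hm : 0 ≤ m) (hqm : q ≤ m)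
    (hXS : ∀ᵐ ω ∂μ, ω ∈ S → X ω ≤ q) (hA0 : 0 < μ.real A) (hAS' : μ.real A < μ.real S)
    (htail : μ.real {ω | n * m / (n - 1) < X ω} ≤ μ.real S - μ.real A) :
    ∫ u in Icc (1 - μ.real S + μ.real A) 1, leftQuantile μ (allocation X S A n m) u
      = (μ.real S - μ.real A) * (m / (n - 1))
        + (∫ ω in {ω | n * m / (n - 1) < X ω}, (X ω - n * m / (n - 1)) ∂μ) / n := by
  have hn' : (1 : ℝ) < n := by exact_mod_cast hn
  have hY : Integrable (allocation X S A n m) μ := integrable_allocation hX hS hA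
  have hS1 : μ.real S ≤ 1 := measureReal_le_one
  have hlt : μ.real {ω | allocation X S A n m ω < m / (n - 1)} ≤ 1 - μ.real S + μ.real A :=
    calc μ.real {ω | allocation X S A n m ω < m / (n - 1)} ≤ μ.real (A ∪ Sᶜ) := by
          refine measureReal_mono fun ω hω => ?_
          by_contra hAS
          simp only [mem_union, mem_compl_iff, not_or, not_not] at hAS
          exact hω.ne (allocation_of_mem_sdiff ⟨hAS.2, hAS.1⟩)
      _ ≤ μ.real A + μ.real Sᶜ := measureReal_union_le _ _
      _ = 1 - μ.real S + μ.real A := by rw [probReal_compl_eq_one_sub hS]; ring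
  have hgt : μ.real {ω | allocation X S A n m ω ≤ m / (n - 1)}ᶜ ≤ μ.real S - μ.real A := by
    refine le_trans (measureReal_mono_ae ?_) htail
    filter_upwards [allocation_le_of_mem hAS hn hm hqm hXS]
      with ω h (hω : ¬ allocation X S A n m ω ≤ m / (n - 1))
    have hωS : ω ∉ S := fun hωS => hω (h hωS)
    rw [not_le, allocation_of_notMem hAS hωS, lt_div_iff₀ (by linarith)] at hω
    show n * m / (n - 1) < X ω
    rw [mul_div_assoc]
    linarith
  rw [probReal_compl_eq_one_sub₀ (nullMeasurableSet_le hY.aemeasurable aemeasurable_const)] at hgt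
  rw [integral_Icc_one_leftQuantile hY ⟨by linarith, by linarith⟩ hlt (by linarith),
    integral_max_allocation hX hAS hn hm hqm hXS]
  ring

lemma avgQuantile_allocation (hX : Integrable X μ) (hS : MeasurableSet S)
    (hA : MeasurableSet A) (hAS : A ⊆ S) (hn : 1 < n) (hm : 0 ≤ m) (hqm : q ≤ m)
    (hXS : ∀ᵐ ω ∂μ, ω ∈ S → X ω ≤ q) (hXSc : ∀ᵐ ω ∂μ, ω ∉ S → q ≤ X ω)
    (hA0 : 0 < μ.real A) (hAS' : μ.real A < μ.real S) (hS1 : μ.real S < 1)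
    (htail : μ.real {ω | n * m / (n - 1) < X ω} ≤ μ.real S - μ.real A) :
    avgQuantile μ (allocation X S A n m) (Icc 0 (μ.real A) ∪ Icc (1 - μ.real S + μ.real A) 1)
      = (μ.real S)⁻¹ * (∫ ω in A, (X ω - m) ∂μ + (μ.real S - μ.real A) * (m / (n - 1))
        + (∫ ω in {ω | n * m / (n - 1) < X ω}, (X ω - n * m / (n - 1)) ∂μ) / n) := by
  have hdisj : Disjoint (Icc 0 (μ.real A)) (Icc (1 - μ.real S + μ.real A) 1) :=
    disjoint_left.2 fun u hu hu' => by linarith [hu.2, hu'.1]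
  have hI := integrableOn_Icc_leftQuantile (integrable_allocation hX hS hA (n := n) (m := m))
  rw [avgQuantile, ← measureReal_def,
    measureReal_union hdisj measurableSet_Icc measure_Icc_lt_top.ne measure_Icc_lt_top.ne,
    Real.volume_real_Icc_of_le measureReal_nonneg, Real.volume_real_Icc_of_le (by linarith),
    setIntegral_union hdisj measurableSet_Icc (hI.mono_set (Icc_subset_Icc_right (by linarith)))
      (hI.mono_set (Icc_subset_Icc_left (by linarith))),
    integral_Icc_zero_leftQuantile_allocation hX hS hA hAS hn hm hqm hXS hXSc
      ⟨hA0, by linarith⟩,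
    integral_Icc_one_leftQuantile_allocation hX hS hA hAS hn hm hqm hXS hA0 hAS' htail]
  ring

lemma sum_avgQuantile_allocation {A : Fin n → Set Ω} (hX : Integrable X μ)
    (hA : ∀ i, MeasurableSet (A i)) (hdisj : Pairwise (Function.onFun Disjoint A))
    (hunion : ⋃ i, A i = S)
    (hn : 1 < n) (hm : 0 ≤ m) (hqm : q ≤ m) (hXS : ∀ᵐ ω ∂μ, ω ∈ S → X ω ≤ q)
    (hXSc : ∀ᵐ ω ∂μ, ω ∉ S → q ≤ X ω) (hA0 : ∀ i, 0 < μ.real (A i))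
    (hAS' : ∀ i, μ.real (A i) < μ.real S) (hS1 : μ.real S < 1)
    (htail : ∀ i, μ.real {ω | n * m / (n - 1) < X ω} ≤ μ.real S - μ.real (A i)) :
    ∑ i, avgQuantile μ (allocation X S (A i) n m)
        (Icc 0 (μ.real (A i)) ∪ Icc (1 - μ.real S + μ.real (A i)) 1)
      = avgQuantile μ X (Icc 0 (μ.real S))
        + 1 / μ.real S * ∫ ω in {ω | n * m / (n - 1) < X ω}, (X ω - n * m / (n - 1)) ∂μ := by
  have hn' : (1 : ℝ) < n := by exact_mod_cast hn
  have hS : MeasurableSet S := hunion ▸ MeasurableSet.iUnion hA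
  have hAS i : A i ⊆ S := hunion ▸ subset_iUnion A i
  have hμS : μ.real S = ∑ i, μ.real (A i) := hunion ▸ measureReal_iUnion_fintype hdisj hA
  have hS0 : 0 < μ.real S := (hA0 ⟨0, by omega⟩).trans (hAS' _)
  have hsum : ∑ i, ∫ ω in A i, (X ω - m) ∂μ = ∫ ω in S, X ω ∂μ - m * μ.real S := by
    have hXm : Integrable (fun ω => X ω - m) μ := hX.sub (integrable_const m)
    rw [← integral_iUnion_fintype hA hdisj fun i => hXm.integrableOn,
      hunion, integral_sub hX.integrableOn (integrable_const m), setIntegral_const, smul_eq_mul,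
      mul_comm]
  have hlow : avgQuantile μ X (Icc 0 (μ.real S)) = (μ.real S)⁻¹ * ∫ ω in S, X ω ∂μ := by
    rw [avgQuantile, ← measureReal_def, Real.volume_real_Icc_of_le hS0.le, sub_zero,
      integral_Icc_leftQuantile_eq_setIntegral hX hS ⟨hS0, hS1⟩ hXS hXSc]
  rw [Finset.sum_congr rfl fun i _ => avgQuantile_allocation hX hS (hA i) (hAS i) hn hm hqm hXS
    hXSc (hA0 i) (hAS' i) hS1 (htail i), ← Finset.mul_sum, Finset.sum_add_distrib,
    Finset.sum_add_distrib, hsum, ← Finset.sum_mul, Finset.sum_sub_distrib, ← hμS,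
    Finset.sum_const, Finset.sum_const, Finset.card_univ, Fintype.card_fin, nsmul_eq_mul,
    nsmul_eq_mul, hlow]
  have hn1 : (n : ℝ) - 1 ≠ 0 := (sub_pos.2 hn').ne'
  field_simp
  ring

end Allocation

end Quantile

open Quantile in
theorem stmt11 {Ω : Type*} [MeasurableSpace Ω] (μ : Measure Ω) [IsProbabilityMeasure μ]
    (n : ℕ) (hn : 2 ≤ n) (X : Ω → ℝ) (hX : Integrable X μ)
    (β : Fin n → ℝ) (hβ : ∀ i, β i ∈ Set.Ioo (0 : ℝ) 1)
    (B : ℝ) (hBdef : B = ∑ i, β i) (hB : B ∈ Set.Ioo (0 : ℝ) 1)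
    (m : ℝ) (hm0 : 0 ≤ m) (hmB : leftQuantile μ X B ≤ m)
    (hmi : ∀ i, leftQuantile μ X (1 - B + β i) ≤ m)
    (U : Ω → ℝ) (hUlaw : Measure.map U μ = volume.restrict (Set.Icc (0 : ℝ) 1))
    (hUX : ∀ᵐ ω ∂μ, leftQuantile μ X (U ω) = X ω)
    (A : Fin n → Set Ω) (hAmeas : ∀ i, MeasurableSet (A i))
    (hdisj : Pairwise (Function.onFun Disjoint A))
    (hunion : (⋃ i, A i) = {ω | U ω ≤ B})
    (hAprob : ∀ i, (μ (A i)).toReal = β i) :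
    (∑ i, avgQuantile μ
        (fun ω => Set.indicator (A i) (fun ω' => X ω' - m) ω
          + Set.indicator {ω' | U ω' ≤ B}ᶜ (fun ω' => X ω' / n) ω
          + Set.indicator ({ω' | U ω' ≤ B} \ A i) (fun _ => m / (n - 1)) ω)
        (Set.Icc 0 (β i) ∪ Set.Icc (1 - B + β i) 1))
      = avgQuantile μ X (Set.Icc 0 B)
        + (1 / B) * ∫ ω in {ω | n * m / (n - 1) < X ω},
            (X ω - n * m / (n - 1)) ∂μ := by
  obtain ⟨hB0, hB1⟩ := hB
  have hμA : ∀ i, μ.real (A i) = β i := hAprob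
  have hμS : μ.real {ω | U ω ≤ B} = B := by
    rw [← hunion, measureReal_iUnion_fintype hdisj hAmeas, hBdef]
    exact Finset.sum_congr rfl fun i _ => hμA i
  have : Nontrivial (Fin n) := Fin.nontrivial_iff_two_le.2 hn
  have hβB i : β i < B := hBdef ▸ Finset.single_lt_sum_of_pos (fun j => (hβ j).1) i
  have hn' : (1 : ℝ) < n := by exact_mod_cast hn
  have htail i : μ.real {ω | n * m / (n - 1) < X ω} ≤ B - β i := by
    have := measureReal_lt_le_of_leftQuantile_le hX.aemeasurable
      ⟨by linarith [(hβ i).1], by linarith [hβB i]⟩ ((hmi i).trans (le_mul_div_sub_one hn' hm0))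
    linarith
  have hU := ae_mem_Ioo_of_map_eq_uniform hUlaw
  have key := sum_avgQuantile_allocation hX hAmeas hdisj hunion hn hm0 hmB
    (ae_le_leftQuantile_of_le hX.aemeasurable hUX hU hB1)
    ((ae_leftQuantile_le_of_lt hX.aemeasurable hUX hU hB0).mono fun ω h hω => h (not_le.1 hω))
    (fun i => by rw [hμA]; exact (hβ i).1) (fun i => by rw [hμA, hμS]; exact hβB i)
    (by rw [hμS]; exact hB1) (fun i => by rw [hμA, hμS]; exact htail i)
  simp only [hμS, hμA] at key
  exact key
end
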